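/- arXiv:1701.02459 — 3 statements merged into one kernel-verified Lean document; each statement's English description precedes it below -/
import Mathlib

section
/- Let n ≥ 1 and let I_n + A ∈ GL_n(R_n) be a matrix satisfying (I_n + A)·σ⃗ = σ⃗. Then det(I_n + A) = ∏_{r=1}^n x_r^{s_r} for some integers s_1,…,s_n. -/
noncomputable section

open Matrix

/-- The Laurent polynomial ring `ℤ[x₁^{±1},…,x_n^{±1}]`, realized as the group
algebra of the free abelian group `ℤⁿ` over `ℤ`. -/
abbrev LaurentR (n : ℕ) : Type := AddMonoidAlgebra ℤ (Fin n →₀ ℤ)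

/-- `x_i` as a unit of `LaurentR n`. -/
def Xu {n : ℕ} (i : Fin n) : (LaurentR n)ˣ where
  val := AddMonoidAlgebra.single (Finsupp.single i 1) 1
  inv := AddMonoidAlgebra.single (-Finsupp.single i 1) 1
  val_inv := by
    rw [AddMonoidAlgebra.single_mul_single]
    simp [AddMonoidAlgebra.one_def]
  inv_val := by
    rw [AddMonoidAlgebra.single_mul_single]
    simp [AddMonoidAlgebra.one_def]

/-- `x_i` as an element of `LaurentR n`. -/
def Xv {n : ℕ} (i : Fin n) : LaurentR n := (Xu i : LaurentR n)

/-- `σ_i = x_i - 1`. -/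
def sg {n : ℕ} (i : Fin n) : LaurentR n := Xv i - 1

/-- The vector `σ⃗`. -/
def sgVec (n : ℕ) : Fin n → LaurentR n := fun i => sg i

/-- `μ_{r,m} = 1 + x_r + ⋯ + x_r^{m-1}`. -/
def muv {n : ℕ} (r : Fin n) (m : ℕ) : LaurentR n := ∑ i ∈ Finset.range m, Xv r ^ i

/-- The augmentation ideal `𝔄_n = Σ σ_i R_n`. -/
def augI (n : ℕ) : Ideal (LaurentR n) := Ideal.span (Set.range (sgVec n))

/-- The ideal `m·R_n`. -/
def OI (n m : ℕ) : Ideal (LaurentR n) := Ideal.span {(m : LaurentR n)}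

/-- The ideal `H_{n,m} = Σ_r (x_r^m − 1)R_n + mR_n`. -/
def HI (n m : ℕ) : Ideal (LaurentR n) :=
  Ideal.span (Set.range (fun r : Fin n => Xv r ^ m - 1) ∪ {(m : LaurentR n)})

/-- `IA_n = {A ∈ GL_n(R_n) : A·σ⃗ = σ⃗}` as a subgroup of `GL_n(R_n)`. -/
def IAn (n : ℕ) : Subgroup (GL (Fin n) (LaurentR n)) where
  carrier := {g | (g : Matrix (Fin n) (Fin n) (LaurentR n)) *ᵥ sgVec n = sgVec n}
  one_mem' := by simp
  mul_mem' := by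
    intro a b ha hb
    simp only [Set.mem_setOf_eq, Units.val_mul] at *
    rw [← Matrix.mulVec_mulVec, hb, ha]
  inv_mem' := by
    intro a ha
    simp only [Set.mem_setOf_eq] at *
    have h : ((a⁻¹ : GL (Fin n) (LaurentR n)) : Matrix (Fin n) (Fin n) (LaurentR n)) *ᵥ
        ((a : Matrix (Fin n) (Fin n) (LaurentR n)) *ᵥ sgVec n) = sgVec n := by
      rw [Matrix.mulVec_mulVec, ← Units.val_mul, inv_mul_cancel, Units.val_one,
        Matrix.one_mulVec]
    rw [ha] at h
    exact h

/-- The underlying matrix of an element of `IA_n`. -/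
def matOf {n : ℕ} (g : IAn n) : Matrix (Fin n) (Fin n) (LaurentR n) :=
  ((g : GL (Fin n) (LaurentR n)) : Matrix (Fin n) (Fin n) (LaurentR n))

/-- The principal congruence subgroup `IG_{n,m}` (as a subset of `IA_n`). -/
def IGnm (n m : ℕ) : Set (IAn n) := {g | ∀ k l, (matOf g - 1) k l ∈ HI n m}

/-- `IA_n^m`: the subgroup of `IA_n` generated by all `m`-th powers. -/
def IApow (n m : ℕ) : Subgroup (IAn n) := Subgroup.closure (Set.range fun g : IAn n => g ^ m)


/-- `ISL_{n−1,i}(H)` for `n = k+1`: elements `I + A` of `IA_n` whose `i`-th row of `A`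
vanishes, all entries of the minor `A_{i,i}` lie in `σ_iR_n ∩ H`, and
`det(I_{n−1} + A_{i,i}) = 1`. -/
def ISL {k : ℕ} (i : Fin (k + 1)) (H : Ideal (LaurentR (k + 1))) : Set (IAn (k + 1)) :=
  {g | (∀ l, (matOf g - 1) i l = 0) ∧
    (∀ a b : Fin k, (matOf g - 1) (i.succAbove a) (i.succAbove b) ∈
      Ideal.span {sg i} ⊓ H) ∧
    ((matOf g).submatrix i.succAbove i.succAbove).det = 1}

/-- `IGL_{n−1,i}` for `n = k+1`: elements `I + A` of `IA_n` whose `i`-th row of `A`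
vanishes and all entries of the minor `A_{i,i}` lie in `σ_iR_n`. -/
def IGLset {k : ℕ} (i : Fin (k + 1)) : Set (IAn (k + 1)) :=
  {g | (∀ l, (matOf g - 1) i l = 0) ∧
    ∀ a b : Fin k, (matOf g - 1) (i.succAbove a) (i.succAbove b) ∈ Ideal.span {sg i}}

/-- The elementary matrix `I_d + r·E_{a,b}` (`a ≠ b`) as an element of `GL_d(A)`. -/
def elemGL {d : ℕ} {A : Type*} [CommRing A] (a b : Fin d) (hab : a ≠ b) (r : A) :
    GL (Fin d) A where
  val := 1 + Matrix.single a b r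
  inv := 1 - Matrix.single a b r
  val_inv := by
    have h2 : Matrix.single a b r * Matrix.single a b r = 0 :=
      Matrix.single_mul_single_of_ne (h := hab.symm) ..
    rw [mul_sub, mul_one, add_mul, one_mul, h2]
    abel
  inv_val := by
    have h2 : Matrix.single a b r * Matrix.single a b r = 0 :=
      Matrix.single_mul_single_of_ne (h := hab.symm) ..
    rw [sub_mul, one_mul, mul_add, mul_one, h2]
    abel

/-- `E_d(A)`: the subgroup generated by the elementary matrices. -/
def Egrp (d : ℕ) (A : Type*) [CommRing A] : Subgroup (GL (Fin d) A) :=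
  Subgroup.closure {g | ∃ (a b : Fin d) (hab : a ≠ b) (r : A), g = elemGL a b hab r}

/-- `E_d(A,H)`: the normal closure in `E_d(A)` of the elementary matrices with
parameter in the ideal `H`. -/
def EgrpRel (d : ℕ) (A : Type*) [CommRing A] (H : Ideal A) : Subgroup (GL (Fin d) A) :=
  Subgroup.closure {g | ∃ e ∈ Egrp d A, ∃ (a b : Fin d) (hab : a ≠ b), ∃ r ∈ H,
    g = e * elemGL a b hab r * e⁻¹}

/-- The generic column ideal used in the definitions of `J_{m,u,v}` and `J̃_{m,u,v}`
(with 1-indexed `u ∈ {0,…,n}` and `v` a 0-indexed column, so "`v ≤ u`" reads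
`v.val < u`).  `lead` is the leading factor (`𝔄̃_u` resp. `𝔄_n`). -/
def colIdeal (n m u : ℕ) (lead : Ideal (LaurentR n)) (v : Fin n) : Ideal (LaurentR n) :=
  lead * ((∑ r : Fin n, if r.val < u then augI n * Ideal.span {sg r * muv r m} else 0)
      + augI n * OI n m + OI n m ^ 2)
    + (if v.val < u then
        ∑ r : Fin n, if u ≤ r.val then Ideal.span {sg r ^ 3 * muv r m} else 0
      else
        (∑ r : Fin n, if u ≤ r.val ∧ r ≠ v then Ideal.span {sg r ^ 3 * muv r m} else 0)
          + augI n * Ideal.span {sg v ^ 2 * muv v m})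

/-- `𝔄̃_u = Σ_{r=u+1}^n σ_rR_n` (1-indexed `u`). -/
def augTil (n u : ℕ) : Ideal (LaurentR n) :=
  Ideal.span {x | ∃ r : Fin n, u ≤ r.val ∧ x = sg r}

/-- The ideal `J̃_{m,u,v}`. -/
def Jtil (n m u : ℕ) (v : Fin n) : Ideal (LaurentR n) := colIdeal n m u (augTil n u) v

/-- The ideal `J_{m,u,v}`. -/
def Jfull (n m u : ℕ) (v : Fin n) : Ideal (LaurentR n) := colIdeal n m u (augI n) v

/-- The determinant condition `det = ∏_r x_r^{s_r·m²}`. -/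
def detMon (n m : ℕ) (g : IAn n) : Prop :=
  ∃ s : Fin n → ℤ,
    (matOf g).det = ∏ r : Fin n, ((Xu r ^ (s r * (m : ℤ) ^ 2) : (LaurentR n)ˣ) : LaurentR n)

/-- The set `𝕁̃_{m,u}`. -/
def JmatTil (n m u : ℕ) : Set (IAn n) :=
  {g | (∀ k v, (matOf g - 1) k v ∈ Jtil n m u v) ∧ detMon n m g}

/-- The set `𝕁_{m,u}`. -/
def JmatFull (n m u : ℕ) : Set (IAn n) :=
  {g | (∀ k v, (matOf g - 1) k v ∈ Jfull n m u v) ∧ detMon n m g}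

/-- The ideal `J_m = Σ_r σ_r³μ_{r,m}R_n + 𝔄_n²·mR_n + 𝔄_n·m²R_n`. -/
def JmI (n m : ℕ) : Ideal (LaurentR n) :=
  Ideal.span (Set.range fun r : Fin n => sg r ^ 3 * muv r m)
    + augI n ^ 2 * OI n m + augI n * OI n (m ^ 2)

/-- The free metabelian group `Φ_n = F_n/F_n''`. -/
instance derivedSeries_normal' (G : Type*) [Group G] (n : ℕ) : (derivedSeries G n).Normal :=
  derivedSeries_normal _ _

def Phi (n : ℕ) : Type := FreeGroup (Fin n) ⧸ derivedSeries (FreeGroup (Fin n)) 2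

instance (n : ℕ) : Group (Phi n) :=
  inferInstanceAs (Group (FreeGroup (Fin n) ⧸ derivedSeries (FreeGroup (Fin n)) 2))

/-!
Apply the ring map `ℤ[ℤⁿ] → ℤ[ε]`, `x^a ↦ 1 + a_j ε`, to the `k`-th row of `(I + A)·σ⃗ = σ⃗`:
since `σ_i ↦ δ_{ij} ε`, the `ε`-coefficient reads `aug (I + A)_{kj} = δ_{kj}`. Hence
`aug det(I + A) = 1`. On the other hand `det(I + A)` is a unit of the group ring `ℤ[ℤⁿ]`, and
since `ℤⁿ` has two unique sums, every unit is a monomial `c·x^a`; the augmentation forces `c = 1`.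
-/

namespace AddMonoidAlgebra

variable {R A : Type*} [Semiring R] [NoZeroDivisors R] [AddMonoid A] [TwoUniqueSums A]

/-- Two distinct pairs with unique sums would give two monomials in `f * g = 1`. -/
theorem exists_eq_single_of_isUnit {f : AddMonoidAlgebra R A} (hf : IsUnit f) :
    ∃ a c, f = single a c := by
  classical
  obtain ⟨g, h⟩ := hf.exists_right_inv
  have unique_sum_eq_zero : ∀ p ∈ f.coeff.support ×ˢ g.coeff.support,
      UniqueAdd f.coeff.support g.coeff.support p.1 p.2 → p.1 + p.2 = 0 := by
    intro p hp hu
    rw [Finset.mem_product, Finsupp.mem_support_iff, Finsupp.mem_support_iff] at hp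
    have hne : (f * g).coeff (p.1 + p.2) ≠ 0 := by
      rw [coeff_mul_add_of_uniqueAdd hu]
      exact mul_ne_zero hp.1 hp.2
    by_contra h0
    rw [h, one_def, coeff_single, Finsupp.single_apply, if_neg (Ne.symm h0)] at hne
    exact hne rfl
  by_cases hcard : 1 < f.coeff.support.card * g.coeff.support.card
  · obtain ⟨p, hp, q, hq, hpq, hpu, hqu⟩ := TwoUniqueSums.uniqueAdd_of_one_lt_card hcard
    rw [Finset.mem_product] at hq
    have := hpu hq.1 hq.2 ((unique_sum_eq_zero q (Finset.mem_product.2 hq) hqu).trans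
      (unique_sum_eq_zero p hp hpu).symm)
    exact absurd (Prod.ext this.1 this.2) hpq.symm
  · have hf : f.coeff.support.card ≤ 1 := by
      rcases Nat.eq_zero_or_pos g.coeff.support.card with hg | hg
      · have : f = 0 := by
          rw [Finset.card_eq_zero, Finsupp.support_eq_empty, coeff_eq_zero] at hg
          rw [← mul_one f, ← h, hg, mul_zero, mul_zero]
        simp [this]
      · nlinarith
    obtain ⟨a, ha⟩ := Finsupp.card_support_le_one.1 hf
    exact ⟨a, f.coeff a, coeff_injective ha⟩

end AddMonoidAlgebra

namespace LaurentR

variable {n : ℕ}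

def aug (n : ℕ) : LaurentR n →ₐ[ℤ] ℤ := AddMonoidAlgebra.lift ℤ ℤ (Fin n →₀ ℤ) 1

@[simp]
theorem aug_single (a : Fin n →₀ ℤ) (c : ℤ) : aug n (AddMonoidAlgebra.single a c) = c := by
  simp [aug, AddMonoidAlgebra.lift_single]

open DualNumber

/-- `x^a ↦ 1 + a_j ε`; the induced ring map sends `f` to `aug f + (∂f/∂x_j)(1) ε`. -/
def dualMonomial (j : Fin n) : Multiplicative (Fin n →₀ ℤ) →* DualNumber ℤ where
  toFun a := 1 + ((a.toAdd j : ℤ) : DualNumber ℤ) * ε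
  map_one' := by simp
  map_mul' a b := by
    simp only [toAdd_mul, Finsupp.add_apply, Int.cast_add]
    linear_combination -(a.toAdd j * b.toAdd j : DualNumber ℤ) * eps_mul_eps (R := ℤ)

def toDual (j : Fin n) : LaurentR n →ₐ[ℤ] DualNumber ℤ :=
  AddMonoidAlgebra.lift ℤ (DualNumber ℤ) (Fin n →₀ ℤ) (dualMonomial j)

theorem toDual_sg (j i : Fin n) : toDual j (sg i) = if i = j then ε else 0 := by
  have hX : toDual j (Xv i) = 1 + ((Finsupp.single i 1 j : ℤ) : DualNumber ℤ) * ε :=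
    (AddMonoidAlgebra.lift_single _ _ _).trans (one_smul _ _)
  rw [sg, map_sub, map_one, hX, add_sub_cancel_left, Finsupp.single_apply]
  split_ifs <;> simp

theorem fst_toDual (j : Fin n) (x : LaurentR n) : (toDual j x).fst = aug n x := by
  induction x using AddMonoidAlgebra.induction_linear with
  | zero => simp
  | add f g hf hg => rw [map_add, map_add, TrivSqZeroExt.fst_add, hf, hg]
  | single a c => simp [toDual, AddMonoidAlgebra.lift_single, dualMonomial]

theorem map_aug_eq_one_of_mulVec_sgVec {M : Matrix (Fin n) (Fin n) (LaurentR n)}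
    (hM : M *ᵥ sgVec n = sgVec n) : M.map (aug n) = 1 := by
  ext k j
  have hrow := congrArg (fun v => toDual j (v k)) hM
  simp only [Matrix.mulVec, dotProduct, sgVec, map_sum, map_mul, toDual_sg, mul_ite, mul_zero,
    Finset.sum_ite_eq', Finset.mem_univ, if_true] at hrow
  replace hrow := congrArg TrivSqZeroExt.snd hrow
  rw [Matrix.map_apply, Matrix.one_apply, ← fst_toDual j]
  split_ifs at hrow ⊢ <;> simpa using hrow

theorem aug_det_eq_one_of_mulVec_sgVec {M : Matrix (Fin n) (Fin n) (LaurentR n)}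
    (hM : M *ᵥ sgVec n = sgVec n) : aug n M.det = 1 := by
  rw [AlgHom.map_det, AlgHom.mapMatrix_apply, map_aug_eq_one_of_mulVec_sgVec hM, Matrix.det_one]

def monomialUnit (n : ℕ) : Multiplicative (Fin n →₀ ℤ) →* (LaurentR n)ˣ :=
  (Units.map (AddMonoidAlgebra.of ℤ (Fin n →₀ ℤ))).comp toUnits.toMonoidHom

theorem prod_Xu_zpow (a : Fin n →₀ ℤ) :
    ∏ r : Fin n, ((Xu r ^ a r : (LaurentR n)ˣ) : LaurentR n) = AddMonoidAlgebra.single a 1 := by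
  have hXu (r : Fin n) : Xu r = monomialUnit n (.ofAdd (Finsupp.single r 1)) := Units.ext rfl
  simp_rw [hXu, ← map_zpow, ← ofAdd_zsmul, Finsupp.smul_single_one, ← Units.coeHom_apply,
    ← map_prod, ← ofAdd_sum, Finsupp.univ_sum_single]
  rfl

end LaurentR

theorem statement_1_general (n : ℕ) (g : GL (Fin n) (LaurentR n)) (hg : g ∈ IAn n) :
    ∃ s : Fin n → ℤ, (g : Matrix (Fin n) (Fin n) (LaurentR n)).det =
      ∏ r : Fin n, ((Xu r ^ s r : (LaurentR n)ˣ) : LaurentR n) := by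
  obtain ⟨a, c, hdet⟩ :=
    AddMonoidAlgebra.exists_eq_single_of_isUnit (Matrix.isUnits_det_units g)
  have hc : c = 1 := by
    simpa [hdet] using LaurentR.aug_det_eq_one_of_mulVec_sgVec hg
  exact ⟨a, by rw [hdet, hc, LaurentR.prod_Xu_zpow]⟩

/-- For `I + A ∈ GL_n(R_n)` with `(I+A)·σ⃗ = σ⃗`,
`det(I+A) = ∏_r x_r^{s_r}` for some integers `s_r`. -/
theorem statement_1 (n : ℕ) (hn : 1 ≤ n) (g : GL (Fin n) (LaurentR n)) (hg : g ∈ IAn n) :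
    ∃ s : Fin n → ℤ, (g : Matrix (Fin n) (Fin n) (LaurentR n)).det =
      ∏ r : Fin n, ((Xu r ^ s r : (LaurentR n)ˣ) : LaurentR n) :=
  statement_1_general n g hg
end
end

section
/- Let n ≥ 1 and m ≥ 1. Then IG_{n,m²} ⊆ 𝕁_m; i.e. for every I_n + A ∈ IA_n all of whose entries of A lie in H_{n,m²}, every entry of A lies in the ideal J_m = Σ_{r=1}^n σ_r³μ_{r,m}R_n + 𝔄_n²·mR_n + 𝔄_n·m²R_n, and det(I_n + A) = ∏_{r=1}^n x_r^{s_r m²} for some integers s_1,…,s_n. -/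
noncomputable section

open Matrix

/-!
The entries: `H_{n,m²}` is generated by `m²` and the `x_r^{m²} - 1`, which already lie in `J_m`,
so every entry of `A` lies in `J_m + m²R_n`. The relation `A·σ⃗ = 0` forces each entry to have
augmentation `0`, and an element of `J_m + m²R_n` with augmentation `0` lies in `J_m` because
`𝔄_n·m² ⊆ J_m`.

The determinant: `det(I_n + A)` is a unit of `ℤ[ℤⁿ]`, hence a monomial `c·x^a` since `ℤⁿ`
has two unique sums. It is `≡ 1` modulo `J_m`; the augmentation gives `c = 1`, and the ring map
`x_r ↦ 1 + ε`, `x_j ↦ 1` into `(ℤ/m²)[ε]`, which kills `J_m`, gives `m² ∣ a_r`.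
-/

namespace AddMonoidAlgebra

open Finset

theorem exists_eq_single_of_mul_eq_one {R G : Type*} [Semiring R] [NoZeroDivisors R]
    [Nontrivial R] [AddZeroClass G] [TwoUniqueSums G] {f g : AddMonoidAlgebra R G}
    (h : f * g = 1) : ∃ a c, f = single a c := by
  classical
  have hf : f.coeff.support.Nonempty :=
    Finsupp.support_nonempty_iff.2 (by simpa using left_ne_zero_of_mul_eq_one h)
  have hg : g.coeff.support.Nonempty :=
    Finsupp.support_nonempty_iff.2 (by simpa using right_ne_zero_of_mul_eq_one h)
  have hcard : #f.coeff.support * #g.coeff.support ≤ 1 := by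
    by_contra! hlt
    obtain ⟨p, hp, q, hq, hpq, hup, huq⟩ := TwoUniqueSums.uniqueAdd_of_one_lt_card hlt
    -- a uniquely reached sum carries a nonzero coefficient of `f * g = 1`, so it is `0`
    have hsum : ∀ {p : G × G}, p ∈ f.coeff.support ×ˢ g.coeff.support →
        UniqueAdd f.coeff.support g.coeff.support p.1 p.2 → p.1 + p.2 = 0 := by
      intro p hp hu
      rw [mem_product, Finsupp.mem_support_iff, Finsupp.mem_support_iff] at hp
      have := coeff_mul_add_of_uniqueAdd hu
      rw [h, one_def, coeff_single, Finsupp.single_apply] at this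
      by_contra hne
      exact mul_ne_zero hp.1 hp.2 ((if_neg (Ne.symm hne)).symm.trans this).symm
    have := hup (mem_product.1 hq).1 (mem_product.1 hq).2 ((hsum hq huq).trans (hsum hp hup).symm)
    exact hpq (Prod.ext this.1.symm this.2.symm)
  have hf1 : #f.coeff.support = 1 := by
    have := hg.card_pos
    have := hf.card_pos
    nlinarith
  obtain ⟨a, -, ha⟩ := Finsupp.card_support_eq_one.1 hf1
  exact ⟨a, f.coeff a, coeff_injective (by rw [coeff_single]; exact ha)⟩

end AddMonoidAlgebra

theorem Matrix.det_sub_one_mem {ι R : Type*} [Fintype ι] [DecidableEq ι] [CommRing R]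
    {I : Ideal R} {M : Matrix ι ι R} (hM : ∀ i j, (M - 1) i j ∈ I) : M.det - 1 ∈ I := by
  have hmap : (Ideal.Quotient.mk I).mapMatrix M = 1 := by
    ext i j
    simpa [← map_one (Ideal.Quotient.mk I).mapMatrix, Ideal.Quotient.eq] using hM i j
  rw [← Ideal.Quotient.eq, map_one, RingHom.map_det, hmap, det_one]

theorem Ideal.mem_ker_unitsMap_mk {R : Type*} [CommRing R] {I : Ideal R} {u : Rˣ} :
    u ∈ (Units.map (Ideal.Quotient.mk I : R →* R ⧸ I)).ker ↔ (u : R) - 1 ∈ I := by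
  rw [MonoidHom.mem_ker, Units.ext_iff, Units.coe_map, Units.val_one, ← Ideal.Quotient.eq,
    map_one]
  rfl

theorem DualNumber.mul_le_ker_of_le_comap_span_eps {R C : Type*} [CommRing R] [CommRing C]
    (f : R →+* DualNumber C) {I J : Ideal R}
    (hI : I ≤ (Ideal.span {DualNumber.eps}).comap f)
    (hJ : J ≤ (Ideal.span {DualNumber.eps}).comap f) : I * J ≤ RingHom.ker f := by
  rw [← Ideal.map_eq_bot_iff_le_ker, Ideal.map_mul, eq_bot_iff]
  calc Ideal.map f I * Ideal.map f J
        ≤ Ideal.span {DualNumber.eps} * Ideal.span {DualNumber.eps} :=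
        Ideal.mul_mono (Ideal.map_le_iff_le_comap.2 hI) (Ideal.map_le_iff_le_comap.2 hJ)
    _ = ⊥ := by rw [Ideal.span_singleton_mul_span_singleton, DualNumber.eps_mul_eps,
        Ideal.span_singleton_eq_bot]

theorem sub_one_dvd_geom_sum_sub {A : Type*} [CommRing A] (x : A) (m : ℕ) :
    x - 1 ∣ (∑ i ∈ Finset.range m, x ^ i) - m := by
  have h : (∑ i ∈ Finset.range m, x ^ i) - m = ∑ i ∈ Finset.range m, (x ^ i - 1 ^ i) := by
    simp [Finset.sum_sub_distrib]
  rw [h]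
  exact Finset.dvd_sum fun i _ => sub_dvd_pow_sub_pow x 1 i

def DualNumber.oneAddEpsHom {G C : Type*} [AddMonoid G] [CommRing C] (φ : G →+ C) :
    Multiplicative G →* DualNumber C where
  toFun a := 1 + φ a.toAdd • DualNumber.eps
  map_one' := by simp
  map_mul' a b := by
    ext <;> simp [add_smul, add_comm]

open AddMonoidAlgebra

section Laurent

variable {n : ℕ}

def toDualNumber (r : Fin n) (C : Type*) [CommRing C] : LaurentR n →ₐ[ℤ] DualNumber C :=
  lift ℤ _ _ (DualNumber.oneAddEpsHom ((Int.castAddHom C).comp (Finsupp.applyAddHom r)))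

def augmentation (n : ℕ) : LaurentR n →ₐ[ℤ] ℤ := lift ℤ ℤ _ 1

theorem toDualNumber_single_one (r : Fin n) (C : Type*) [CommRing C] (a : Fin n →₀ ℤ) :
    toDualNumber r C (single a 1) = 1 + (a r : C) • DualNumber.eps := by
  simp [toDualNumber, DualNumber.oneAddEpsHom]

theorem Xv_eq_single (i : Fin n) : Xv i = single (Finsupp.single i 1) 1 := rfl

theorem toDualNumber_sg (r j : Fin n) (C : Type*) [CommRing C] :
    toDualNumber r C (sg j) = if j = r then DualNumber.eps else 0 := by
  rw [sg, map_sub, map_one, Xv_eq_single, toDualNumber_single_one, Finsupp.single_apply]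
  split_ifs <;> simp

theorem augmentation_single (a : Fin n →₀ ℤ) (c : ℤ) : augmentation n (single a c) = c := by
  simp [augmentation]

theorem sg_mem_augI (j : Fin n) : sg j ∈ augI n := Ideal.subset_span ⟨j, rfl⟩

theorem augI_le_comap_toDualNumber (r : Fin n) (C : Type*) [CommRing C] :
    augI n ≤ (Ideal.span {DualNumber.eps}).comap (toDualNumber r C) := by
  refine Ideal.span_le.2 ?_
  rintro _ ⟨j, rfl⟩
  rw [SetLike.mem_coe, Ideal.mem_comap, sgVec, toDualNumber_sg]
  split_ifs
  exacts [Ideal.mem_span_singleton_self _, zero_mem _]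

theorem augI_le_ker_augmentation : augI n ≤ RingHom.ker (augmentation n) := by
  refine Ideal.span_le.2 ?_
  rintro _ ⟨j, rfl⟩
  simp [sgVec, sg, Xv_eq_single, augmentation_single]

theorem Xu_zpow (i : Fin n) (k : ℤ) :
    ((Xu i ^ k : (LaurentR n)ˣ) : LaurentR n) = single (Finsupp.single i k) 1 := by
  have hXu : Xu i = (AddMonoidAlgebra.of ℤ _).toHomUnits (.ofAdd (Finsupp.single i 1)) :=
    Units.ext rfl
  rw [hXu, ← map_zpow, ← ofAdd_zsmul, Finsupp.smul_single_one]
  rfl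

theorem single_one_eq_prod_Xu_zpow (a : Fin n →₀ ℤ) :
    (single a 1 : LaurentR n) = ∏ r, ((Xu r ^ a r : (LaurentR n)ˣ) : LaurentR n) := by
  have hof (b : Fin n →₀ ℤ) : (single b 1 : LaurentR n) = AddMonoidAlgebra.of ℤ _ (.ofAdd b) :=
    rfl
  simp_rw [Xu_zpow, hof]
  conv_lhs => rw [← Finsupp.univ_sum_single a]
  rw [ofAdd_sum, map_prod]

theorem single_one_sub_one_mem_augI (a : Fin n →₀ ℤ) :
    (single a 1 : LaurentR n) - 1 ∈ augI n := by
  rw [single_one_eq_prod_Xu_zpow, ← Units.coe_prod, ← Ideal.mem_ker_unitsMap_mk]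
  refine Subgroup.prod_mem _ fun r _ => zpow_mem ?_ _
  exact Ideal.mem_ker_unitsMap_mk.2 (sg_mem_augI r)

theorem sub_augmentation_mem_augI (f : LaurentR n) :
    f - (augmentation n f : LaurentR n) ∈ augI n := by
  have h : Ideal.Quotient.mkₐ ℤ (augI n) = (Algebra.ofId ℤ _).comp (augmentation n) := by
    refine AddMonoidAlgebra.algHom_ext (fun a => ?_) (Subsingleton.elim _ _)
    rw [AlgHom.comp_apply, augmentation_single, map_one, Ideal.Quotient.mkₐ_eq_mk,
      ← map_one (Ideal.Quotient.mk (augI n)), Ideal.Quotient.eq]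
    exact single_one_sub_one_mem_augI a
  rw [← Ideal.Quotient.eq, ← Ideal.Quotient.mkₐ_eq_mk ℤ, h, map_intCast]
  rfl

theorem span_sg_cube_mul_muv_le_JmI (m : ℕ) :
    Ideal.span (Set.range fun r : Fin n => sg r ^ 3 * muv r m) ≤ JmI n m :=
  le_sup_of_le_left le_sup_left

theorem augI_sq_mul_OI_le_JmI (m : ℕ) : augI n ^ 2 * OI n m ≤ JmI n m :=
  le_sup_of_le_left le_sup_right

theorem augI_mul_OI_sq_le_JmI (m : ℕ) : augI n * OI n (m ^ 2) ≤ JmI n m :=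
  le_sup_right

theorem JmI_le_augI_mul (m : ℕ) : JmI n m ≤ augI n * (augI n ⊔ OI n (m ^ 2)) := by
  refine sup_le (sup_le ?_ ?_) (Ideal.mul_mono_right le_sup_right)
  · refine Ideal.span_le.2 (Set.range_subset_iff.2 fun r => ?_)
    rw [SetLike.mem_coe, show sg r ^ 3 * muv r m = sg r * (sg r * (sg r * muv r m)) by ring]
    exact Ideal.mul_mem_mul (sg_mem_augI r)
      (Ideal.mem_sup_left (Ideal.mul_mem_right _ _ (sg_mem_augI r)))
  · calc augI n ^ 2 * OI n m ≤ augI n ^ 2 := Ideal.mul_le_left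
      _ ≤ augI n * (augI n ⊔ OI n (m ^ 2)) := by
        rw [sq]
        exact Ideal.mul_mono_right le_sup_left

theorem augmentation_eq_zero_of_mem_JmI {m : ℕ} {x : LaurentR n} (hx : x ∈ JmI n m) :
    augmentation n x = 0 :=
  augI_le_ker_augmentation (Ideal.mul_le_left (JmI_le_augI_mul m hx))

theorem toDualNumber_eq_zero_of_mem_JmI (r : Fin n) {m : ℕ} {x : LaurentR n}
    (hx : x ∈ JmI n m) : toDualNumber r (ZMod (m ^ 2)) x = 0 := by
  have hOI :
      OI n (m ^ 2) ≤ (Ideal.span {DualNumber.eps}).comap (toDualNumber r (ZMod (m ^ 2))) := by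
    rw [OI, Ideal.span_le, Set.singleton_subset_iff, SetLike.mem_coe, Ideal.mem_comap, map_natCast,
      ← map_natCast (algebraMap (ZMod (m ^ 2)) _), ZMod.natCast_self, map_zero]
    exact zero_mem _
  exact DualNumber.mul_le_ker_of_le_comap_span_eps (toDualNumber r (ZMod (m ^ 2))).toRingHom
    (augI_le_comap_toDualNumber r _) (sup_le (augI_le_comap_toDualNumber r _) hOI)
    (JmI_le_augI_mul m hx)

/-- With `y = x_r^m`: `x_r^{m²} - 1 = μ_m(y)·μ_{r,m}·σ_r`, and both `μ`'s are `≡ m` modulo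
`y - 1 = μ_{r,m}σ_r` resp. `σ_r`. -/
theorem Xv_pow_sq_sub_one_mem_JmI (r : Fin n) (m : ℕ) : Xv r ^ (m ^ 2) - 1 ∈ JmI n m := by
  obtain ⟨P, hP⟩ : sg r ∣ muv r m - m := sub_one_dvd_geom_sum_sub (Xv r) m
  obtain ⟨Q, hQ⟩ := sub_one_dvd_geom_sum_sub (Xv r ^ m) m
  have hmu : muv r m * sg r = Xv r ^ m - 1 := geom_sum_mul _ _
  have key : Xv r ^ (m ^ 2) - 1
      = sg r * (m ^ 2 : ℕ) + sg r ^ 2 * m * (P + Q * muv r m) + Q * P * (sg r ^ 3 * muv r m) := by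
    rw [sq m, pow_mul, ← geom_sum_mul, eq_add_of_sub_eq' hQ, ← hmu]
    push_cast
    linear_combination (m * sg r + Q * muv r m * sg r ^ 2) * hP
  rw [key]
  refine add_mem (add_mem ?_ ?_) ?_
  · exact augI_mul_OI_sq_le_JmI m
      (Ideal.mul_mem_mul (sg_mem_augI r) (Ideal.mem_span_singleton_self _))
  · refine augI_sq_mul_OI_le_JmI m (Ideal.mul_mem_right _ _ ?_)
    exact Ideal.mul_mem_mul (Ideal.pow_mem_pow (sg_mem_augI r) 2) (Ideal.mem_span_singleton_self _)
  · exact span_sg_cube_mul_muv_le_JmI m (Ideal.mul_mem_left _ _ (Ideal.subset_span ⟨r, rfl⟩))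

theorem HI_sq_le_JmI_sup_OI (m : ℕ) : HI n (m ^ 2) ≤ JmI n m ⊔ OI n (m ^ 2) := by
  refine Ideal.span_le.2 (Set.union_subset (Set.range_subset_iff.2 fun r => ?_) ?_)
  · exact Ideal.mem_sup_left (Xv_pow_sq_sub_one_mem_JmI r m)
  · rw [Set.singleton_subset_iff]
    exact Ideal.mem_sup_right (Ideal.mem_span_singleton_self _)

theorem mem_JmI_of_mem_sup_OI {m : ℕ} {x : LaurentR n} (hx : x ∈ JmI n m ⊔ OI n (m ^ 2))
    (h0 : augmentation n x = 0) : x ∈ JmI n m := by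
  obtain ⟨j, hj, y, hy, rfl⟩ := Submodule.mem_sup.1 hx
  obtain ⟨c, rfl⟩ := Ideal.mem_span_singleton'.1 hy
  have hc : augmentation n c * (m ^ 2 : ℕ) = 0 := by
    simpa [augmentation_eq_zero_of_mem_JmI hj] using h0
  have hsplit : c * (m ^ 2 : ℕ) = (c - augmentation n c) * (m ^ 2 : ℕ)
      + ((augmentation n c * (m ^ 2 : ℕ) : ℤ) : LaurentR n) := by
    push_cast
    ring
  rw [hsplit, hc, Int.cast_zero, add_zero]
  exact add_mem hj (augI_mul_OI_sq_le_JmI m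
    (Ideal.mul_mem_mul (sub_augmentation_mem_augI c) (Ideal.mem_span_singleton_self _)))

theorem sub_one_mulVec_sgVec (g : IAn n) : (matOf g - 1) *ᵥ sgVec n = 0 := by
  rw [sub_mulVec, one_mulVec, sub_eq_zero]
  exact g.2

/-- Applying `toDualNumber l` to the `k`-th entry of `(g - 1)·σ⃗ = 0` leaves
`ε(A_{kl})·ε = 0`. -/
theorem augmentation_sub_one_apply (g : IAn n) (k l : Fin n) :
    augmentation n ((matOf g - 1) k l) = 0 := by
  set a := (matOf g - 1) k l
  have hrow : toDualNumber l ℤ a * DualNumber.eps = 0 := by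
    have := congrArg (toDualNumber l ℤ) (congrFun (sub_one_mulVec_sgVec g) k)
    simpa only [mulVec, dotProduct, sgVec, map_sum, map_mul, toDualNumber_sg, mul_ite, mul_zero,
      Finset.sum_ite_eq', Finset.mem_univ, if_true, Pi.zero_apply, map_zero] using this
  have hsq : toDualNumber l ℤ ((a - augmentation n a) * sg l) = 0 :=
    DualNumber.mul_le_ker_of_le_comap_span_eps (toDualNumber l ℤ).toRingHom
      (augI_le_comap_toDualNumber l ℤ) (augI_le_comap_toDualNumber l ℤ)
      (Ideal.mul_mem_mul (sub_augmentation_mem_augI a) (sg_mem_augI l))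
  rw [map_mul, toDualNumber_sg, if_pos rfl, map_sub, map_intCast] at hsq
  have : (augmentation n a : DualNumber ℤ) * DualNumber.eps = 0 := by
    linear_combination hrow - hsq
  simpa using congrArg TrivSqZeroExt.snd this

theorem sub_one_apply_mem_JmI {m : ℕ} {g : IAn n} (hg : g ∈ IGnm n (m ^ 2)) (k l : Fin n) :
    (matOf g - 1) k l ∈ JmI n m :=
  mem_JmI_of_mem_sup_OI (HI_sq_le_JmI_sup_OI m (hg k l)) (augmentation_sub_one_apply g k l)

theorem sq_dvd_of_single_one_sub_one_mem_JmI {m : ℕ} {a : Fin n →₀ ℤ}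
    (ha : (single a 1 : LaurentR n) - 1 ∈ JmI n m) (r : Fin n) : (m : ℤ) ^ 2 ∣ a r := by
  have h := toDualNumber_eq_zero_of_mem_JmI r ha
  rw [map_sub, map_one, toDualNumber_single_one, add_sub_cancel_left] at h
  have h' : ((a r : ℤ) : ZMod (m ^ 2)) = 0 := by simpa using congrArg TrivSqZeroExt.snd h
  exact_mod_cast (ZMod.intCast_zmod_eq_zero_iff_dvd _ _).1 h'

theorem detMon_of_forall_mem_JmI {m : ℕ} (g : IAn n)
    (h : ∀ k l, (matOf g - 1) k l ∈ JmI n m) : detMon n m g := by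
  have hdet : (matOf g).det - 1 ∈ JmI n m := Matrix.det_sub_one_mem h
  obtain ⟨a, c, hac⟩ : ∃ a c, (matOf g).det = AddMonoidAlgebra.single a c :=
    exists_eq_single_of_mul_eq_one
    (Matrix.GeneralLinearGroup.val_det_apply g.1 ▸ (Matrix.GeneralLinearGroup.det g.1).mul_inv)
  have hc : c = 1 := by
    have := augmentation_eq_zero_of_mem_JmI hdet
    rwa [hac, map_sub, map_one, augmentation_single, sub_eq_zero] at this
  subst hc
  refine ⟨fun r => a r / (m : ℤ) ^ 2, ?_⟩
  rw [hac, single_one_eq_prod_Xu_zpow]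
  simp_rw [Int.ediv_mul_cancel (sq_dvd_of_single_one_sub_one_mem_JmI (hac ▸ hdet) _)]

end Laurent

theorem statement_14_general (n m : ℕ) (g : IAn n) (hg : g ∈ IGnm n (m ^ 2)) :
    (∀ k l, (matOf g - 1) k l ∈ JmI n m) ∧ detMon n m g :=
  ⟨sub_one_apply_mem_JmI hg, detMon_of_forall_mem_JmI g (sub_one_apply_mem_JmI hg)⟩

/-- `IG_{n,m²} ⊆ 𝕁_m`: for every `I_n + A ∈ IA_n` all of whose entries of
`A` lie in `H_{n,m²}`, every entry of `A` lies in
`J_m = Σ_r σ_r³μ_{r,m}R_n + 𝔄_n²·mR_n + 𝔄_n·m²R_n` and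
`det(I_n + A) = ∏_r x_r^{s_r·m²}` for some integers `s_r`. -/
theorem statement_14 (n m : ℕ) (hn : 1 ≤ n) (hm : 1 ≤ m) (g : IAn n)
    (hg : g ∈ IGnm n (m ^ 2)) :
    (∀ k l, (matOf g - 1) k l ∈ JmI n m) ∧ detMon n m g :=
  statement_14_general n m g hg
end
end

section
/- Let n ≥ 4, 2 ≤ u ≤ n and m ≥ 1, and let π_{u−1} : R_n → R_n be the unique ℤ-algebra homomorphism with π_{u−1}(x_r) = x_r for r ≤ u−1 and π_{u−1}(x_r) = 1 for r ≥ u. Suppose b_1,…,b_{u−1} ∈ R_n satisfy: π_{u−1}(b_v) = b_v for each v; each b_v lies in the ideal Σ_{r=1}^{u−1} 𝔄_nσ_rμ_{r,m}R_n + 𝔄_n·mR_n + m²R_n of R_n; and Σ_{v=1}^{u−1} σ_v b_v = 0. Then the matrix I_n + Σ_{v=1}^{u−1} σ_u b_v E_{u,v}, which equals the identity except for the entries σ_u b_1,…,σ_u b_{u−1} in columns 1,…,u−1 of the u-th row, lies in IA_n^m. -/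
noncomputable section

open Matrix

/-! For a row `z` with `z u = 0` and `z ⬝ᵥ σ⃗ = 0`, the matrix `I + E_u z` lies in `IA_n` and its
`m`-th power is `I + E_u (m z)`. For `a ≠ u`, the Koszul row `κ = σ_a e_u − σ_u e_a` gives
`I + E_u κ` with diagonal entry `x_a`; the `m`-th powers of `I + E_u (κ + z)` and `I + E_u κ`
differ by `I + E_u (μ_{a,m} z)`. So `I + E_u (e z) ∈ IA_n^m` whenever `e` lies in the ideal
generated by `m` and the `μ_{a,m}`, `a ≠ u`.

The row `σ_u b` is then cleared column by column, from the last nonzero column `w` down. Applying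
the retraction that sends `x_v ↦ 1` for `v < w` to `Σ_v σ_v b_v = 0` shows that it kills `b_w`,
so `b_w = Σ_{v<w} σ_v c_v` with each `c_v` in that ideal. Subtracting the Koszul rows
`σ_u c_v (σ_v e_w − σ_w e_v)`, all in `IA_n^m`, moves column `w` into the columns `v < w`. -/

section CommRing
variable {R ι : Type*} [CommRing R] [Fintype ι] [DecidableEq ι]

lemma exists_sum_of_mem_span_image (f : ι → R) (s : Set ι) {x : R}
    (hx : x ∈ Ideal.span (f '' s)) : ∃ c : ι → R, (∀ i ∉ s, c i = 0) ∧ x = ∑ i, c i * f i := by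
  induction hx using Submodule.span_induction with
  | mem x hx =>
    obtain ⟨i, hi, rfl⟩ := hx
    refine ⟨Pi.single i 1, fun j hj => Pi.single_eq_of_ne (by rintro rfl; exact hj hi) _, ?_⟩
    simp [Pi.single_apply]
  | zero => exact ⟨0, fun _ _ => rfl, by simp⟩
  | add x y _ _ hx hy =>
    obtain ⟨c, hc, rfl⟩ := hx
    obtain ⟨d, hd, rfl⟩ := hy
    exact ⟨c + d, fun i hi => by simp [hc i hi, hd i hi], by simp [add_mul, Finset.sum_add_distrib]⟩
  | smul a x _ hx =>
    obtain ⟨c, hc, rfl⟩ := hx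
    exact ⟨a • c, fun i hi => by simp [hc i hi], by simp [Finset.mul_sum, mul_assoc]⟩

lemma exists_sum_of_mem_mul_span_image (I : Ideal R) (f : ι → R) (s : Set ι) {x : R}
    (hx : x ∈ I * Ideal.span (f '' s)) :
    ∃ c : ι → R, (∀ i, c i ∈ I) ∧ (∀ i ∉ s, c i = 0) ∧ x = ∑ i, c i * f i := by
  rw [← Ideal.smul_eq_mul] at hx
  refine Submodule.smul_induction_on hx (fun a ha y hy => ?_) fun x y hx hy => ?_
  · obtain ⟨c, hc, rfl⟩ := exists_sum_of_mem_span_image f s hy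
    exact ⟨a • c, fun i => I.mul_mem_right _ ha, fun i hi => by simp [hc i hi],
      by simp [Finset.mul_sum, mul_assoc]⟩
  · obtain ⟨c, hcI, hc, rfl⟩ := hx
    obtain ⟨d, hdI, hd, rfl⟩ := hy
    exact ⟨c + d, fun i => I.add_mem (hcI i) (hdI i), fun i hi => by simp [hc i hi, hd i hi],
      by simp [add_mul, Finset.sum_add_distrib]⟩

lemma sub_map_mem_span_mul (ρ : R →+* R) {G : Set R} {L : Ideal R} (hG : ∀ g ∈ G, ρ g = g)
    (hL : ∀ y, y - ρ y ∈ L) {x : R} (hx : x ∈ Ideal.span G) : x - ρ x ∈ Ideal.span G * L := by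
  induction hx using Submodule.span_induction with
  | mem g hg => simp [hG g hg]
  | zero => simp
  | add x y _ _ hx hy => simpa [add_sub_add_comm] using add_mem hx hy
  | smul a x hx hxρ =>
    have key : a * x - ρ (a * x) = x * (a - ρ a) + ρ a * (x - ρ x) := by rw [map_mul]; ring
    rw [smul_eq_mul, key]
    exact add_mem (Ideal.mul_mem_mul hx (hL a)) (Ideal.mul_mem_left _ _ hxρ)

end CommRing

section RowMatrix
variable {ι R : Type*} [DecidableEq ι] [CommRing R]

def rowMat (u : ι) (c : ι → R) : Matrix ι ι R := vecMulVec (Pi.single u 1) c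

variable (u : ι)

lemma rowMat_apply (c : ι → R) (p q : ι) : rowMat u c p q = if p = u then c q else 0 := by
  simp [rowMat, vecMulVec_apply, Pi.single_apply]

variable [Fintype ι]

lemma one_add_rowMat_mul (c d : ι → R) :
    (1 + rowMat u c) * (1 + rowMat u d) = 1 + rowMat u (c + d + c u • d) := by
  simp only [rowMat, add_mul, mul_add, one_mul, mul_one, vecMulVec_mul_vecMulVec,
    dotProduct_single, vecMulVec_add]
  abel

lemma one_add_rowMat_pow (c : ι → R) (k : ℕ) :
    (1 + rowMat u c) ^ k = 1 + rowMat u ((∑ i ∈ Finset.range k, (1 + c u) ^ i) • c) := by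
  induction k with
  | zero => simp [rowMat]
  | succ k ih =>
    rw [pow_succ, ih, one_add_rowMat_mul]
    congr 2
    ext q
    simp only [Pi.add_apply, Pi.smul_apply, smul_eq_mul, Finset.sum_range_succ]
    linear_combination c q * geom_sum_mul (1 + c u) k

lemma det_one_add_rowMat (c : ι → R) : (1 + rowMat u c).det = 1 + c u := by
  rw [rowMat, vecMulVec_eq Unit, det_one_add_replicateCol_mul_replicateRow, dotProduct_single,
    mul_one]

lemma rowMat_mulVec (c v : ι → R) : rowMat u c *ᵥ v = Pi.single u (c ⬝ᵥ v) := by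
  ext p
  simp [rowMat, vecMulVec_mulVec, Pi.single_apply]

end RowMatrix

section Laurent

variable {n : ℕ}

def retract (s : Set (Fin n)) [DecidablePred (· ∈ s)] : LaurentR n →+* LaurentR n :=
  AddMonoidAlgebra.mapDomainRingHom ℤ (Finsupp.filterAddHom (· ∉ s))

section retract
variable (s : Set (Fin n)) [DecidablePred (· ∈ s)]

lemma retract_Xv_of_mem {v : Fin n} (hv : v ∈ s) : retract s (Xv v) = 1 := by
  simp [retract, Xv, Xu, Finsupp.filterAddHom, Finsupp.filter_single_of_neg, hv,
    AddMonoidAlgebra.one_def]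

lemma retract_Xv_of_notMem {v : Fin n} (hv : v ∉ s) : retract s (Xv v) = Xv v := by
  simp [retract, Xv, Xu, Finsupp.filterAddHom, Finsupp.filter_single_of_pos, hv]

lemma retract_sg_of_mem {v : Fin n} (hv : v ∈ s) : retract s (sg v) = 0 := by
  rw [sg, map_sub, retract_Xv_of_mem s hv, map_one, sub_self]

lemma retract_sg_of_notMem {v : Fin n} (hv : v ∉ s) : retract s (sg v) = sg v := by
  rw [sg, map_sub, retract_Xv_of_notMem s hv, map_one]

lemma retract_muv_of_notMem {v : Fin n} (hv : v ∉ s) (m : ℕ) :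
    retract s (muv v m) = muv v m := by
  simp [muv, map_sum, retract_Xv_of_notMem s hv]

lemma sub_retract_mem_span (f : LaurentR n) : f - retract s f ∈ Ideal.span (sg '' s) := by
  rw [← Ideal.Quotient.eq, ← RingHom.comp_apply]
  congr 1
  ext v
  · exact RingHom.congr_fun (RingHom.ext_int _ _) v
  · suffices h : Ideal.Quotient.mk (Ideal.span (sg '' s)) (Xv v) =
        Ideal.Quotient.mk _ (retract s (Xv v)) by simpa [Xv, Xu] using h
    by_cases hv : v ∈ s
    · rw [retract_Xv_of_mem s hv, ← sub_eq_zero, ← map_sub, Ideal.Quotient.eq_zero_iff_mem]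
      exact Ideal.subset_span ⟨v, hv, rfl⟩
    · rw [retract_Xv_of_notMem s hv]

end retract

lemma sg_ne_zero (v : Fin n) : sg v ≠ 0 := by
  rw [sg, sub_ne_zero]
  intro h
  change AddMonoidAlgebra.single (Finsupp.single v 1) (1 : ℤ) = AddMonoidAlgebra.single 0 1 at h
  exact Finsupp.single_ne_zero.2 one_ne_zero (AddMonoidAlgebra.single_left_inj one_ne_zero |>.1 h)

lemma retract_eq_zero_of_dotProduct_eq_zero {w : Fin n} {b : Fin n → LaurentR n}
    (hb : ∀ v : Fin n, w.val < v.val → b v = 0) (hsum : sgVec n ⬝ᵥ b = 0) :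
    retract {v | v.val < w.val} (b w) = 0 := by
  have h := congrArg (retract {v | v.val < w.val}) hsum
  rw [dotProduct, map_sum, map_zero, Finset.sum_eq_single w] at h
  · simpa [sgVec, retract_sg_of_notMem, sg_ne_zero] using h
  · intro v _ hvw
    rcases lt_or_gt_of_ne (Fin.val_ne_of_ne hvw) with hv | hv
    · rw [map_mul, sgVec, retract_sg_of_mem _ (show v ∈ {v : Fin n | v.val < w.val} from hv),
        zero_mul]
    · simp [hb v hv]
  · simp

section IA
variable (u : Fin n)

def rowIA (c : Fin n → LaurentR n) (hc : IsUnit (1 + c u)) (hσ : c ⬝ᵥ sgVec n = 0) : IAn n :=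
  ⟨((isUnit_iff_isUnit_det _).2 ((det_one_add_rowMat u c).symm ▸ hc)).unit, by
    change (1 + rowMat u c) *ᵥ sgVec n = sgVec n
    rw [add_mulVec, one_mulVec, rowMat_mulVec, hσ, Pi.single_zero, add_zero]⟩

lemma matOf_rowIA (c : Fin n → LaurentR n) (hc : IsUnit (1 + c u)) (hσ : c ⬝ᵥ sgVec n = 0) :
    matOf (rowIA u c hc hσ) = 1 + rowMat u c := rfl

lemma matOf_mul (g h : IAn n) : matOf (g * h) = matOf g * matOf h := rfl

lemma matOf_pow (g : IAn n) (k : ℕ) : matOf (g ^ k) = matOf g ^ k := by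
  simp [matOf]

lemma matOf_mul_inv_of_eq {g h : IAn n} {M : Matrix (Fin n) (Fin n) (LaurentR n)}
    (hgh : matOf g = M * matOf h) : matOf (g * h⁻¹) = M := by
  rw [matOf_mul, hgh, mul_assoc, ← matOf_mul, mul_inv_cancel]
  exact mul_one M

def rowKer : Submodule (LaurentR n) (Fin n → LaurentR n) where
  carrier := {z | z u = 0 ∧ z ⬝ᵥ sgVec n = 0}
  add_mem' hz hz' := ⟨by simp [hz.1, hz'.1], by simp [add_dotProduct, hz.2, hz'.2]⟩
  zero_mem' := ⟨rfl, zero_dotProduct _⟩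
  smul_mem' a z hz := ⟨by simp [hz.1], by simp [smul_dotProduct, hz.2]⟩

variable (m : ℕ)

def iaPowRows : AddSubmonoid (Fin n → LaurentR n) where
  carrier := {c | c u = 0 ∧ ∃ g ∈ IApow n m, matOf g = 1 + rowMat u c}
  add_mem' := by
    rintro c d ⟨hc, g, hg, hgc⟩ ⟨hd, h, hh, hhd⟩
    refine ⟨by simp [hc, hd], g * h, mul_mem hg hh, ?_⟩
    rw [matOf_mul, hgc, hhd, one_add_rowMat_mul, hc, zero_smul, add_zero]
  zero_mem' := ⟨rfl, 1, one_mem _, by simp [rowMat]; rfl⟩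

lemma natCast_smul_mem_iaPowRows {z : Fin n → LaurentR n} (hz : z ∈ rowKer u) :
    (m : LaurentR n) • z ∈ iaPowRows u m := by
  refine ⟨by simp [hz.1], rowIA u z (by simp [hz.1]) hz.2 ^ m,
    Subgroup.subset_closure ⟨_, rfl⟩, ?_⟩
  rw [matOf_pow, matOf_rowIA, one_add_rowMat_pow, hz.1]
  simp

end IA

def koszulRow (v w : Fin n) : Fin n → LaurentR n := Pi.single w (sg v) - Pi.single v (sg w)

lemma koszulRow_dotProduct_sgVec (v w : Fin n) : koszulRow v w ⬝ᵥ sgVec n = 0 := by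
  simp [koszulRow, sub_dotProduct, sgVec, mul_comm]

lemma koszulRow_mem_rowKer {u v w : Fin n} (hv : v ≠ u) (hw : w ≠ u) :
    koszulRow v w ∈ rowKer u :=
  ⟨by simp [koszulRow, hv.symm, hw.symm], koszulRow_dotProduct_sgVec v w⟩

lemma single_sub_smul_eq_sum_koszulRow (c : Fin n → LaurentR n) (w : Fin n) :
    Pi.single w (sgVec n ⬝ᵥ c) - sg w • c = ∑ v, c v • koszulRow v w := by
  ext q
  simp [koszulRow, Finset.sum_apply, Pi.single_apply, dotProduct, sgVec, mul_sub,
    Finset.sum_sub_distrib, mul_comm]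

lemma muv_smul_mem_iaPowRows {u a : Fin n} (ha : a ≠ u) (m : ℕ) {z : Fin n → LaurentR n}
    (hz : z ∈ rowKer u) : muv a m • z ∈ iaPowRows u m := by
  have hκu : koszulRow a u u = sg a := by simp [koszulRow, ha.symm]
  have hunit : IsUnit (1 + sg a) := by rw [sg, add_sub_cancel]; exact (Xu a).isUnit
  have hgeom : ∑ i ∈ Finset.range m, (1 + sg a) ^ i = muv a m := by simp [muv, sg]
  let g₁ := rowIA u (koszulRow a u + z) (by simpa [hz.1, hκu])
    (by simp [add_dotProduct, hz.2, koszulRow_dotProduct_sgVec])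
  let g₂ := rowIA u (koszulRow a u) (by rwa [hκu]) (koszulRow_dotProduct_sgVec a u)
  refine ⟨by simp [hz.1], g₁ ^ m * (g₂ ^ m)⁻¹,
    mul_mem (Subgroup.subset_closure ⟨_, rfl⟩) (inv_mem (Subgroup.subset_closure ⟨_, rfl⟩)),
    matOf_mul_inv_of_eq ?_⟩
  rw [matOf_pow, matOf_pow, matOf_rowIA, matOf_rowIA, one_add_rowMat_pow, one_add_rowMat_pow,
    one_add_rowMat_mul, Pi.add_apply, hz.1, add_zero, hκu, hgeom]
  simp [hz.1, smul_add, add_comm]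

section Ideals
variable (u : Fin n) (m : ℕ)

def iaPowIdeal : Ideal (LaurentR n) where
  carrier := {e | ∀ z ∈ rowKer u, e • z ∈ iaPowRows u m}
  add_mem' ha hb z hz := by simpa [add_smul] using add_mem (ha z hz) (hb z hz)
  zero_mem' z _ := by rw [zero_smul]; exact zero_mem _
  smul_mem' a e he z hz := by
    simpa [mul_smul, smul_comm a e] using he (a • z) (Submodule.smul_mem _ a hz)

def tailIdeal (k : ℕ) : Ideal (LaurentR n) :=
  Ideal.span (insert (m : LaurentR n) ((muv · m) '' {r | k ≤ r.val ∧ r.val < u.val}))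

/-- The retraction killing `x_v` for `v < k` kills the generators `σ_r μ_{r,m}`, `r < k`, and fixes
those of `tailIdeal u m k`. -/
def entryIdeal (k : ℕ) : Ideal (LaurentR n) :=
  Ideal.span ((fun r => sg r * muv r m) '' {r | r.val < k}) ⊔ tailIdeal u m k

lemma natCast_mem_tailIdeal (k : ℕ) : (m : LaurentR n) ∈ tailIdeal u m k :=
  Ideal.subset_span (Set.mem_insert _ _)

lemma muv_mem_tailIdeal {k : ℕ} {r : Fin n} (hk : k ≤ r.val) (hr : r.val < u.val) :
    muv r m ∈ tailIdeal u m k :=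
  Ideal.subset_span (Set.mem_insert_of_mem _ ⟨r, ⟨hk, hr⟩, rfl⟩)

lemma tailIdeal_anti {k l : ℕ} (hkl : k ≤ l) : tailIdeal u m l ≤ tailIdeal u m k :=
  Ideal.span_mono (Set.insert_subset_insert (Set.image_mono fun _ hr => ⟨hkl.trans hr.1, hr.2⟩))

lemma tailIdeal_le_entryIdeal (k : ℕ) : tailIdeal u m k ≤ entryIdeal u m k :=
  le_sup_right

lemma tailIdeal_le_iaPowIdeal (k : ℕ) : tailIdeal u m k ≤ iaPowIdeal u m := by
  refine Ideal.span_le.2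
    (Set.insert_subset_iff.2 ⟨fun z hz => natCast_smul_mem_iaPowRows u m hz, ?_⟩)
  rintro _ ⟨r, hr, rfl⟩ z hz
  exact muv_smul_mem_iaPowRows (Fin.ne_of_lt hr.2) m hz

end Ideals

lemma exists_eq_sgVec_dotProduct_of_retract_eq_zero {u : Fin n} {m w : ℕ} (hw : w < u.val)
    {x : LaurentR n} (hx : x ∈ entryIdeal u m w) (hρ : retract {v | v.val < w} x = 0) :
    ∃ c : Fin n → LaurentR n, (∀ v : Fin n, w ≤ v.val → c v = 0) ∧
      (∀ v : Fin n, c v ∈ tailIdeal u m v.val) ∧ x = sgVec n ⬝ᵥ c := by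
  set s : Set (Fin n) := {v | v.val < w}
  obtain ⟨y, hy, z, hz, rfl⟩ := Submodule.mem_sup.1 hx
  have hρy : retract s y = 0 := by
    refine (Ideal.span_le (I := RingHom.ker (retract s)).2 ?_) hy
    rintro _ ⟨r, hr, rfl⟩
    simp [RingHom.mem_ker, retract_sg_of_mem s hr]
  have hρz : retract s z = 0 := by rwa [map_add, hρy, zero_add] at hρ
  have hz' : z ∈ tailIdeal u m w * Ideal.span (sg '' s) := by
    rw [← sub_zero z, ← hρz]
    refine sub_map_mem_span_mul (retract s) ?_ (sub_retract_mem_span s) hz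
    rintro _ (rfl | ⟨r, hr, rfl⟩)
    · exact map_natCast _ _
    · exact retract_muv_of_notMem s (not_lt.2 hr.1) m
  obtain ⟨a, ha, rfl⟩ := exists_sum_of_mem_span_image _ s hy
  obtain ⟨d, hdI, hd, rfl⟩ := exists_sum_of_mem_mul_span_image _ _ s hz'
  refine ⟨fun v => muv v m * a v + d v, fun v hv => ?_, fun v => ?_, ?_⟩
  · simp [ha v (not_lt.2 hv), hd v (not_lt.2 hv)]
  · by_cases hv : v.val < w
    · exact add_mem (Ideal.mul_mem_right _ _ (muv_mem_tailIdeal u m le_rfl (hv.trans hw)))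
        (tailIdeal_anti u m hv.le (hdI v))
    · simp [ha v hv, hd v hv]
  · simp only [dotProduct, sgVec, mul_add, Finset.sum_add_distrib]
    congr 1 <;> exact Finset.sum_congr rfl fun _ _ => by ring

theorem sg_smul_mem_iaPowRows {u : Fin n} {m w : ℕ} (hw : w ≤ u.val) {b : Fin n → LaurentR n}
    (hb0 : ∀ v : Fin n, w ≤ v.val → b v = 0)
    (hbK : ∀ v : Fin n, b v ∈ entryIdeal u m v.val) (hsum : sgVec n ⬝ᵥ b = 0) :
    sg u • b ∈ iaPowRows u m := by
  induction w generalizing b with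
  | zero => simp [show b = 0 from funext fun v => hb0 v (Nat.zero_le _), zero_mem]
  | succ w ih =>
    obtain ⟨W, rfl⟩ : ∃ W : Fin n, W.val = w := ⟨⟨w, by omega⟩, rfl⟩
    have hWu : W ≠ u := Fin.ne_of_lt hw
    obtain ⟨c, hc0, hcI, hbW⟩ := exists_eq_sgVec_dotProduct_of_retract_eq_zero hw (hbK W)
      (retract_eq_zero_of_dotProduct_eq_zero (fun v hv => hb0 v hv) hsum)
    set b' := b - Pi.single W (b W) + sg W • c
    have hb' : sg u • b = sg u • b' + ∑ v, (sg u * c v) • koszulRow v W := by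
      simp only [mul_smul, ← Finset.smul_sum, ← single_sub_smul_eq_sum_koszulRow, ← hbW, b',
        ← smul_add]
      congr 1
      abel
    rw [hb']
    refine add_mem (ih (by omega) (b := b') (fun v hv => ?_) (fun v => ?_) ?_)
      (sum_mem fun v _ => ?_)
    · rcases eq_or_ne v W with rfl | hvW
      · simp [b', hc0 _ le_rfl]
      · have : W.val + 1 ≤ v.val := by have := Fin.val_ne_of_ne hvW; omega
        simp [b', hb0 v this, hvW, hc0 v hv]
    · refine add_mem (sub_mem (hbK v) ?_)
        (Ideal.mul_mem_left _ _ (tailIdeal_le_entryIdeal u m _ (hcI v)))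
      rcases eq_or_ne v W with rfl | hvW
      · simpa using hbK _
      · simp [hvW]
    · simp [b', dotProduct_add, dotProduct_sub, dotProduct_smul, hsum, ← hbW, sgVec]
    · by_cases hv : W.val ≤ v.val
      · simp [hc0 v hv]
      · exact tailIdeal_le_iaPowIdeal u m v.val (Ideal.mul_mem_left _ _ (hcI v)) _
          (koszulRow_mem_rowKer (Fin.ne_of_lt (by omega)) hWu)

lemma augIdeal_sum_le_entryIdeal (u : Fin n) (m k : ℕ) :
    (∑ r : Fin n, if r.val < u.val then augI n * Ideal.span {sg r * muv r m} else 0)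
      + augI n * OI n m + Ideal.span {(m : LaurentR n) ^ 2} ≤ entryIdeal u m k := by
  have hm : Ideal.span {(m : LaurentR n)} ≤ entryIdeal u m k :=
    (Ideal.span_singleton_le_iff_mem _).2
      (tailIdeal_le_entryIdeal u m k (natCast_mem_tailIdeal u m k))
  simp only [Submodule.add_eq_sup, Ideal.sum_eq_sup]
  refine sup_le (sup_le (Finset.sup_le fun r _ => ?_) (Ideal.mul_le_right.trans hm))
    ((Ideal.span_singleton_le_span_singleton.2
      (dvd_pow_self (m : LaurentR n) two_ne_zero)).trans hm)
  split_ifs with hr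
  · refine Ideal.mul_le_right.trans ((Ideal.span_singleton_le_iff_mem _).2 ?_)
    by_cases hrk : r.val < k
    · exact Ideal.mem_sup_left (Ideal.subset_span ⟨r, hrk, rfl⟩)
    · exact tailIdeal_le_entryIdeal u m k
        (Ideal.mul_mem_left _ _ (muv_mem_tailIdeal u m (not_lt.1 hrk) hr))
  · exact bot_le

end Laurent

theorem statement_18_general (n m : ℕ) (u : Fin n)
    (b : Fin n → LaurentR n)
    (hb0 : ∀ v : Fin n, u.val ≤ v.val → b v = 0)
    (hbI : ∀ v : Fin n, v.val < u.val → b v ∈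
      (∑ r : Fin n, if r.val < u.val then augI n * Ideal.span {sg r * muv r m} else 0)
        + augI n * OI n m + Ideal.span {(m : LaurentR n) ^ 2})
    (hsum : ∑ v : Fin n, sg v * b v = 0) :
    ∃ g : IAn n, g ∈ IApow n m ∧
      matOf g = 1 + Matrix.of (fun p q : Fin n =>
        if p = u ∧ q.val < u.val then sg u * b q else 0) := by
  have hbK (v : Fin n) : b v ∈ entryIdeal u m v.val := by
    by_cases hv : v.val < u.val
    · exact augIdeal_sum_le_entryIdeal u m v.val (hbI v hv)
    · simp [hb0 v (not_lt.1 hv)]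
  obtain ⟨-, g, hg, hgb⟩ := sg_smul_mem_iaPowRows le_rfl hb0 hbK hsum
  refine ⟨g, hg, hgb.trans ?_⟩
  refine congrArg _ (Matrix.ext fun p q => ?_)
  by_cases hq : q < u
  · simp [rowMat_apply, hq]
  · simp [rowMat_apply, hq, hb0 q (not_lt.1 hq)]

/-- For `n ≥ 4`, `2 ≤ u ≤ n`, `m ≥ 1`, the `ℤ`-algebra map
`π_{u−1} : R_n → R_n` fixing `x_r` for `r ≤ u−1` and killing `x_r` for `r ≥ u`, and elements
`b_1,…,b_{u−1}` fixed by `π_{u−1}`, lying in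
`Σ_{r=1}^{u−1} 𝔄_nσ_rμ_{r,m}R_n + 𝔄_n·mR_n + m²R_n` and satisfying `Σ_v σ_vb_v = 0`, the
matrix equal to the identity except for the entries `σ_ub_1,…,σ_ub_{u−1}` in columns
`1,…,u−1` of the `u`-th row lies in `IA_n^m`. -/
theorem statement_18 (n m : ℕ) (hn : 4 ≤ n) (hm : 1 ≤ m) (u : Fin n) (hu : 1 ≤ u.val)
    (π : LaurentR n →+* LaurentR n)
    (hπ1 : ∀ r : Fin n, r.val < u.val → π (Xv r) = Xv r)
    (hπ2 : ∀ r : Fin n, u.val ≤ r.val → π (Xv r) = 1)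
    (b : Fin n → LaurentR n)
    (hb0 : ∀ v : Fin n, u.val ≤ v.val → b v = 0)
    (hbπ : ∀ v : Fin n, v.val < u.val → π (b v) = b v)
    (hbI : ∀ v : Fin n, v.val < u.val → b v ∈
      (∑ r : Fin n, if r.val < u.val then augI n * Ideal.span {sg r * muv r m} else 0)
        + augI n * OI n m + Ideal.span {(m : LaurentR n) ^ 2})
    (hsum : ∑ v : Fin n, sg v * b v = 0) :
    ∃ g : IAn n, g ∈ IApow n m ∧
      matOf g = 1 + Matrix.of (fun p q : Fin n =>
        if p = u ∧ q.val < u.val then sg u * b q else 0) :=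
  statement_18_general n m u b hb0 hbI hsum
end
end
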